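/- In the persistence Mayer–Vietoris spectral sequence of a 2-dimensional alpha complex A(X) with grid cover U, the first-page terms E^1_{p,q} = ⊕_{σ∈N(U)^p} σ ⊗ PH_q(A(σ)) vanish for all q ≥ 2, the second-page differentials d^2_{p,q} vanish for p ≥ 5, the spectral sequence collapses at the third page, and the only possibly nontrivial third-page terms are E^3_{0,0}, E^3_{1,0} and E^3_{0,1}; moreover E^2_{3,0} ≅ E^3_{3,0} ≅ im(d^2_{3,0}) forces E^2_{3,0} ≅ E^2_{1,1} via d^2, E^2_{4,0} ≅ E^2_{2,1}, and Ker(d^2_{2,0}) = 0. -/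

import Mathlib

/-!
Planarity kills `E¹_{p,q}` for `q ≥ 2`, and the vanishing of `PH_{≥2}(A(X))` kills every
third-page term with `p + q ≥ 2`. What survives on the third page lies in the columns
`p = 0, 1`, too narrow for any `d^r` with `r ≥ 3`, so the sequence collapses. Around
`E²_{3,0}`, `E²_{4,0}`, `E²_{2,0}`, `E²_{1,1}` and `E²_{2,1}` the differentials entering or
leaving from outside the first quadrant (or from `E²_{0,2} = 0`) are zero, so the vanishing of
the third page there forces the `d²` between them to be injective or surjective.
-/

noncomputable section

/-- An (abstract) homological spectral sequence of `ℤ/2`-vector spaces: pages `E r p q`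
indexed by `r : ℕ` and `p q : ℤ`, differentials recorded as maps `d r p q p' q'` between
arbitrary bidegrees which vanish unless `(p', q') = (p - r, q + r - 1)`, satisfying
`d ∘ d = 0`, and each page being the homology of the previous one. -/
structure SSData where
  E : ℕ → ℤ → ℤ → Type
  [grp : ∀ r p q, AddCommGroup (E r p q)]
  [mod : ∀ r p q, Module (ZMod 2) (E r p q)]
  d : ∀ (r : ℕ) (p q p' q' : ℤ), E r p q →ₗ[ZMod 2] E r p' q'
  dstd : ∀ (r : ℕ) (p q p' q' : ℤ), ¬(p' = p - r ∧ q' = q + r - 1) → d r p q p' q' = 0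
  dd : ∀ (r : ℕ) (p q p' q' p'' q'' : ℤ) (x : E r p q),
    d r p' q' p'' q'' (d r p q p' q' x) = 0
  page : ∀ (r : ℕ) (p q : ℤ), Nonempty (E (r + 1) p q ≃ₗ[ZMod 2]
    (LinearMap.ker (d r p q (p - r) (q + r - 1)) ⧸
      (Submodule.comap (LinearMap.ker (d r p q (p - r) (q + r - 1))).subtype
        (LinearMap.range (d r (p + r) (q - r + 1) p q)))))

attribute [instance] SSData.grp SSData.mod

open LinearMap

namespace SSData

variable (S : SSData)

/- The neighbouring bidegrees are free variables tied down by equations, so that the lemmas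
apply to literal bidegrees such as `S.d 2 3 0 1 1` without rewriting inside dependent types. -/
theorem subsingleton_succ_iff {r : ℕ} {p q p₁ q₁ p₂ q₂ : ℤ}
    (h₁ : p₁ = p - r ∧ q₁ = q + r - 1) (h₂ : p₂ = p + r ∧ q₂ = q - r + 1) :
    Subsingleton (S.E (r + 1) p q) ↔ ker (S.d r p q p₁ q₁) ≤ range (S.d r p₂ q₂ p q) := by
  obtain ⟨rfl, rfl⟩ := h₁
  obtain ⟨rfl, rfl⟩ := h₂
  obtain ⟨e⟩ := S.page r p q
  rw [e.toEquiv.subsingleton_congr, Submodule.Quotient.subsingleton_iff,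
    Submodule.comap_subtype_eq_top]

theorem subsingleton_succ_of_injective {r : ℕ} {p q p₁ q₁ : ℤ}
    (h₁ : p₁ = p - r ∧ q₁ = q + r - 1) (hd : Function.Injective (S.d r p q p₁ q₁)) :
    Subsingleton (S.E (r + 1) p q) :=
  (S.subsingleton_succ_iff h₁ ⟨rfl, rfl⟩).mpr ((ker_eq_bot.mpr hd).trans_le bot_le)

theorem subsingleton_of_le {r₀ r : ℕ} (hr : r₀ ≤ r) {p q : ℤ}
    (h : Subsingleton (S.E r₀ p q)) : Subsingleton (S.E r p q) := by
  induction r, hr using Nat.le_induction with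
  | base => exact h
  | succ r _ ih =>
    exact S.subsingleton_succ_of_injective ⟨rfl, rfl⟩ (Function.injective_of_subsingleton _)

theorem injective_d_of_subsingleton_succ {r : ℕ} {p q p₁ q₁ p₂ q₂ : ℤ}
    (h₁ : p₁ = p - r ∧ q₁ = q + r - 1) (h₂ : p₂ = p + r ∧ q₂ = q - r + 1)
    (hE : Subsingleton (S.E (r + 1) p q)) (hin : S.d r p₂ q₂ p q = 0) :
    Function.Injective (S.d r p q p₁ q₁) := by
  have hker := (S.subsingleton_succ_iff h₁ h₂).mp hE
  rwa [hin, range_zero, le_bot_iff, ker_eq_bot] at hker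

theorem surjective_d_of_subsingleton_succ {r : ℕ} {p q p₁ q₁ p₂ q₂ : ℤ}
    (h₁ : p₁ = p - r ∧ q₁ = q + r - 1) (h₂ : p₂ = p + r ∧ q₂ = q - r + 1)
    (hE : Subsingleton (S.E (r + 1) p q)) (hout : S.d r p q p₁ q₁ = 0) :
    Function.Surjective (S.d r p₂ q₂ p q) := by
  have hker := (S.subsingleton_succ_iff h₁ h₂).mp hE
  rwa [hout, ker_zero, top_le_iff, range_eq_top] at hker

/-- A differential `d^r` moves the column index by `r`, so it cannot connect two columns of a
strip of width `r₀ ≤ r`. -/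
theorem d_eq_zero_of_subsingleton_outside_strip {r₀ r : ℕ} (hr : r₀ ≤ r)
    (hsupp : ∀ p q : ℤ, ¬(0 ≤ p ∧ p < r₀) → Subsingleton (S.E r₀ p q)) (p q p' q' : ℤ) :
    S.d r p q p' q' = 0 := by
  by_cases hstd : p' = p - r ∧ q' = q + r - 1
  · have hr' : (r₀ : ℤ) ≤ r := by exact_mod_cast hr
    by_cases hp : 0 ≤ p ∧ p < r₀
    · have := S.subsingleton_of_le hr (hsupp p' q' (by omega))
      exact Subsingleton.elim _ _
    · have := S.subsingleton_of_le hr (hsupp p q hp)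
      exact Subsingleton.elim _ _
  · exact S.dstd r p q p' q' hstd

end SSData

theorem mv_spectral_sequence_structure (S : SSData)
    (hE0 : ∀ p q : ℤ, (3 ≤ q ∨ (1 ≤ q ∧ 5 ≤ p + q) ∨ p < 0 ∨ q < 0) →
      Subsingleton (S.E 0 p q))
    (hinj : ∀ p : ℤ, Function.Injective (S.d 0 p 2 p 1))
    (hd2geom : ∀ p q p' q' : ℤ, Subsingleton (S.E 0 (p - 1) (q + 1)) →
      S.d 2 p q p' q' = 0)
    (H : ℤ → Type) [∀ m, AddCommGroup (H m)] [∀ m, Module (ZMod 2) (H m)]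
    (hH : ∀ m : ℤ, 2 ≤ m → Subsingleton (H m))
    (hconv : ∀ p q : ℤ, ∃ (W : Submodule (ZMod 2) (H (p + q)))
      (f : W →ₗ[ZMod 2] S.E 3 p q), Function.Surjective f) :
    (∀ p q : ℤ, 2 ≤ q → Subsingleton (S.E 1 p q)) ∧
    (∀ p q p' q' : ℤ, 5 ≤ p → S.d 2 p q p' q' = 0) ∧
    (∀ r : ℕ, 3 ≤ r → ∀ p q p' q' : ℤ, S.d r p q p' q' = 0) ∧
    (∀ p q : ℤ, ¬((p = 0 ∧ q = 0) ∨ (p = 1 ∧ q = 0) ∨ (p = 0 ∧ q = 1)) →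
      Subsingleton (S.E 3 p q)) ∧
    Function.Bijective (S.d 2 3 0 1 1) ∧
    Function.Bijective (S.d 2 4 0 2 1) ∧
    Function.Injective (S.d 2 2 0 0 1) := by
  have hE (r : ℕ) (p q : ℤ) (h : 3 ≤ q ∨ (1 ≤ q ∧ 5 ≤ p + q) ∨ p < 0 ∨ q < 0) :
      Subsingleton (S.E r p q) :=
    S.subsingleton_of_le (Nat.zero_le r) (hE0 p q h)
  have hE1 (p q : ℤ) (hq : 2 ≤ q) : Subsingleton (S.E 1 p q) := by
    rcases hq.lt_or_eq with hq | rfl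
    · exact hE 1 p q (by omega)
    · exact S.subsingleton_succ_of_injective (r := 0) (by norm_num) (hinj p)
  have hE3 (p q : ℤ) (hpq : ¬((p = 0 ∧ q = 0) ∨ (p = 1 ∧ q = 0) ∨ (p = 0 ∧ q = 1))) :
      Subsingleton (S.E 3 p q) := by
    by_cases hquad : p < 0 ∨ q < 0
    · exact hE 3 p q (by omega)
    · obtain ⟨W, f, hf⟩ := hconv p q
      have := hH (p + q) (by omega)
      exact hf.subsingleton
  have hd2 (p q p' q' : ℤ) (hp : 5 ≤ p) : S.d 2 p q p' q' = 0 := by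
    rcases le_or_gt 0 q with hq | hq
    · exact hd2geom p q p' q' (hE0 _ _ (by omega))
    · have := hE 2 p q (by omega)
      exact Subsingleton.elim _ _
  have hcollapse (r : ℕ) (hr : 3 ≤ r) (p q p' q' : ℤ) : S.d r p q p' q' = 0 :=
    S.d_eq_zero_of_subsingleton_outside_strip hr (fun p q hp => hE3 p q (by omega)) p q p' q'
  have := hE 2 5 (-1) (by omega)
  have := hE 2 (-1) 2 (by omega)
  have := hE 2 6 (-1) (by omega)
  have := hE 2 4 (-1) (by omega)
  have := S.subsingleton_of_le (r := 2) one_le_two (hE1 0 2 le_rfl)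
  refine ⟨hE1, hd2, hcollapse, hE3, ⟨?_, ?_⟩, ⟨?_, ?_⟩, ?_⟩
  · exact S.injective_d_of_subsingleton_succ (r := 2) (p₂ := 5) (q₂ := -1) (by norm_num)
      (by norm_num) (hE3 3 0 (by omega)) (Subsingleton.elim _ _)
  · exact S.surjective_d_of_subsingleton_succ (r := 2) (p₁ := -1) (q₁ := 2) (by norm_num)
      (by norm_num) (hE3 1 1 (by omega)) (Subsingleton.elim _ _)
  · exact S.injective_d_of_subsingleton_succ (r := 2) (p₂ := 6) (q₂ := -1) (by norm_num)
      (by norm_num) (hE3 4 0 (by omega)) (Subsingleton.elim _ _)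
  · exact S.surjective_d_of_subsingleton_succ (r := 2) (p₁ := 0) (q₁ := 2) (by norm_num)
      (by norm_num) (hE3 2 1 (by omega)) (Subsingleton.elim _ _)
  · exact S.injective_d_of_subsingleton_succ (r := 2) (p₂ := 4) (q₂ := -1) (by norm_num)
      (by norm_num) (hE3 2 0 (by omega)) (Subsingleton.elim _ _)
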